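/- arXiv:1309.4475 — 7 statements merged into one kernel-verified Lean document; each statement's English description precedes it below -/
import Mathlib

section
/- Let K be a compact Hausdorff space, w ∈ C(K), φ a homeomorphism of K onto itself, and T the weighted composition operator (Tf)(k) = w(k) f(φ(k)) on C(K). If T is semi-Fredholm (its range is closed and either its kernel or cokernel is finite-dimensional), then the zero set Z = {k ∈ K : w(k) = 0} is finite and consists of points isolated in K. -/
/-!
Composition with `φ` is bijective, so `T` has the same range as multiplication by `w`. The
functions `w / max(√|w|, 1/(n+1))` lie in this range and converge uniformly to `w / √|w|`, so by
closedness `w / √|w| = w v` for a continuous `v`; hence `√|w| ‖v‖ ≥ 1` off the zero set `Z`, which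
is therefore open.

If `Z` were infinite, Urysohn bump functions would make evaluation at arbitrarily many points of
`Z` surjective onto the corresponding coordinate spaces, both from the functions supported in
`φ(Z)`, which lie in `ker T`, and from `C(K) / range T`, since `range T` vanishes on `Z`. Finally,
the points of a finite open set in a Hausdorff space are isolated.
-/

open Filter Topology Set

theorem Module.card_le_finrank_of_single_mem_range {k V ι : Type*} [Field k] [AddCommGroup V]
    [Module k V] [FiniteDimensional k V] [Fintype ι] [DecidableEq ι] (L : V →ₗ[k] ι → k)
    (hL : ∀ i, Pi.single i 1 ∈ LinearMap.range L) : Fintype.card ι ≤ Module.finrank k V := by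
  have hsurj : LinearMap.range L = ⊤ := by
    rw [eq_top_iff, ← (Pi.basisFun k ι).span_eq, Submodule.span_le]
    rintro _ ⟨i, rfl⟩
    simpa using hL i
  simpa using LinearMap.finrank_le_finrank_of_surjective (LinearMap.range_eq_top.1 hsurj)

theorem Set.finite_of_forall_finset_card_le {α : Type*} {s : Set α} (N : ℕ)
    (h : ∀ t : Finset α, ↑t ⊆ s → t.card ≤ N) : s.Finite := by
  by_contra hs
  obtain ⟨t, hts, htc⟩ := Set.Infinite.exists_subset_card_eq hs (N + 1)
  have := h t hts
  omega

namespace Complex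

theorem norm_div_sqrt_norm (z : ℂ) : ‖z / (√‖z‖ : ℂ)‖ = √‖z‖ := by
  rw [norm_div, norm_real, Real.norm_of_nonneg (Real.sqrt_nonneg _), Real.div_sqrt]

theorem norm_div_max_sqrt_norm_le (z : ℂ) (ε : ℝ) : ‖z / ((max √‖z‖ ε : ℝ) : ℂ)‖ ≤ √‖z‖ := by
  rcases eq_or_ne z 0 with rfl | hz
  · simp
  have hpos : 0 < √‖z‖ := Real.sqrt_pos.2 (norm_pos_iff.2 hz)
  rw [norm_div, norm_real, Real.norm_of_nonneg (hpos.le.trans (le_max_left _ _))]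
  calc ‖z‖ / max √‖z‖ ε ≤ ‖z‖ / √‖z‖ :=
        div_le_div_of_nonneg_left (norm_nonneg z) hpos (le_max_left _ _)
    _ = √‖z‖ := Real.div_sqrt

theorem dist_div_sqrt_norm_div_max_le (z : ℂ) {ε : ℝ} (hε : 0 ≤ ε) :
    dist (z / (√‖z‖ : ℂ)) (z / ((max √‖z‖ ε : ℝ) : ℂ)) ≤ 2 * ε := by
  rcases le_or_gt ε √‖z‖ with h | h
  · rw [max_eq_left h, dist_self]
    positivity
  · calc _ ≤ ‖z / (√‖z‖ : ℂ)‖ + ‖z / ((max √‖z‖ ε : ℝ) : ℂ)‖ := dist_le_norm_add_norm _ _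
      _ ≤ √‖z‖ + √‖z‖ := add_le_add (norm_div_sqrt_norm z).le (norm_div_max_sqrt_norm_le z ε)
      _ ≤ 2 * ε := by linarith

theorem continuous_div_max_sqrt_norm {ε : ℝ} (hε : 0 < ε) :
    Continuous fun z : ℂ => z / ((max √‖z‖ ε : ℝ) : ℂ) :=
  continuous_id.div (continuous_ofReal.comp (by fun_prop)) fun z =>
    ofReal_ne_zero.2 (hε.trans_le (le_max_right _ _)).ne'

theorem tendstoUniformly_div_max_sqrt_norm {ι : Type*} {l : Filter ι} {ε : ι → ℝ}
    (hε₀ : ∀ i, 0 ≤ ε i) (hε : Tendsto ε l (𝓝 0)) :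
    TendstoUniformly (fun i (z : ℂ) => z / ((max √‖z‖ (ε i) : ℝ) : ℂ))
      (fun z => z / (√‖z‖ : ℂ)) l := by
  rw [Metric.tendstoUniformly_iff]
  intro δ hδ
  filter_upwards [hε.eventually (gt_mem_nhds (half_pos hδ))] with i hi z
  linarith [dist_div_sqrt_norm_div_max_le z (hε₀ i)]

theorem continuous_div_sqrt_norm : Continuous fun z : ℂ => z / (√‖z‖ : ℂ) :=
  (tendstoUniformly_div_max_sqrt_norm (fun _ : ℕ => Nat.one_div_pos_of_nat.le)
    tendsto_one_div_add_atTop_nhds_zero_nat).continuous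
    (Frequently.of_forall fun n : ℕ =>
      continuous_div_max_sqrt_norm (Nat.one_div_pos_of_nat (n := n)))

end Complex

namespace ContinuousMap

variable {K : Type*} [TopologicalSpace K] [CompactSpace K]

theorem isOpen_setOf_eq_zero_of_isClosed_range_mul (w : C(K, ℂ))
    (hw : IsClosed (Set.range (w * ·))) : IsOpen {k | w k = 0} := by
  let s : C(K, ℂ) :=
    ⟨fun k => w k / (√‖w k‖ : ℂ), Complex.continuous_div_sqrt_norm.comp w.continuous⟩
  let ε : ℕ → ℝ := fun n => 1 / ((n : ℝ) + 1)
  let u : ℕ → C(K, ℂ) := fun n =>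
    ⟨fun k => ((max √‖w k‖ (ε n))⁻¹ : ℝ), Complex.continuous_ofReal.comp <|
      Continuous.inv₀ (by fun_prop) fun _ =>
        (Nat.one_div_pos_of_nat.trans_le (le_max_right _ _)).ne'⟩
  have hlim : Tendsto (fun n => w * u n) atTop (𝓝 s) := by
    rw [tendsto_iff_tendstoUniformly]
    convert (Complex.tendstoUniformly_div_max_sqrt_norm (fun _ => Nat.one_div_pos_of_nat.le)
      tendsto_one_div_add_atTop_nhds_zero_nat).comp w using 1
    · ext n k
      simp [u, ε, div_eq_mul_inv]
    · rfl
  obtain ⟨v, hv⟩ := hw.mem_of_tendsto hlim (Eventually.of_forall fun n => ⟨u n, rfl⟩)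
  have hZ : {k | w k = 0} = {k | √‖w k‖ * ‖v‖ < 1} := by
    ext k
    simp only [mem_ofPred_eq]
    refine ⟨fun hk => by simp [hk], fun hlt => not_not.1 fun hk => hlt.not_ge ?_⟩
    have hpos : 0 < √‖w k‖ := Real.sqrt_pos.2 (norm_pos_iff.2 hk)
    have hle : √‖w k‖ ≤ √‖w k‖ * (√‖w k‖ * ‖v‖) := calc
      √‖w k‖ = ‖s k‖ := (Complex.norm_div_sqrt_norm _).symm
      _ = ‖w k‖ * ‖v k‖ := by rw [← hv, mul_apply, norm_mul]
      _ ≤ ‖w k‖ * ‖v‖ := by gcongr; exact v.norm_coe_le_norm k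
      _ = √‖w k‖ * (√‖w k‖ * ‖v‖) := by rw [← mul_assoc, Real.mul_self_sqrt (norm_nonneg _)]
    exact le_of_mul_le_mul_left (by simpa using hle) hpos
  rw [hZ]
  exact isOpen_lt (by fun_prop) continuous_const

variable [T2Space K]

theorem exists_eq_one_eqOn_zero {s : Set K} (hs : IsClosed s) {x : K} (hx : x ∉ s) :
    ∃ g : C(K, ℂ), g x = 1 ∧ EqOn g 0 s := by
  obtain ⟨f, hf0, hf1, -⟩ := exists_continuous_zero_one_of_isClosed hs isClosed_singleton
    (disjoint_singleton_right.2 hx)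
  refine ⟨⟨fun y => (f y : ℂ), by fun_prop⟩, by simp [hf1 rfl], fun y hy => ?_⟩
  simp [hf0 hy]

noncomputable def evalFinset (t : Finset K) : C(K, ℂ) →ₗ[ℂ] (t → ℂ) where
  toFun f x := f x
  map_add' _ _ := rfl
  map_smul' _ _ := rfl

theorem exists_evalFinset_eq_single [DecidableEq K] {U : Set K} (hU : IsOpen U) {t : Finset K}
    (ht : ↑t ⊆ U) (x : t) : ∃ g : C(K, ℂ), (∀ y ∉ U, g y = 0) ∧ evalFinset t g = Pi.single x 1 := by
  obtain ⟨g, hgx, hg0⟩ := exists_eq_one_eqOn_zero (s := Uᶜ ∪ ↑(t.erase x)) (x := x)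
    (hU.isClosed_compl.union (t.erase x).finite_toSet.isClosed) (by simp [ht x.2])
  refine ⟨g, fun y hy => hg0 (Or.inl hy), funext fun y => ?_⟩
  rcases eq_or_ne y x with rfl | hyx
  · simpa [evalFinset] using hgx
  · have hy : (y : K) ∈ t.erase x := Finset.mem_erase.2 ⟨Subtype.coe_ne_coe.2 hyx, y.2⟩
    simpa [evalFinset, hyx] using hg0 (Or.inr hy)

theorem finite_of_finiteDimensional_of_supported_mem {S : Submodule ℂ C(K, ℂ)}
    [FiniteDimensional ℂ S] {U : Set K} (hU : IsOpen U)
    (hS : ∀ f : C(K, ℂ), (∀ x ∉ U, f x = 0) → f ∈ S) : U.Finite := by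
  classical
  refine Set.finite_of_forall_finset_card_le (Module.finrank ℂ S) fun t ht => ?_
  rw [← Fintype.card_coe]
  refine Module.card_le_finrank_of_single_mem_range ((evalFinset t).domRestrict S) fun x => ?_
  obtain ⟨g, hgU, hgx⟩ := exists_evalFinset_eq_single hU ht x
  exact ⟨⟨g, hS g hgU⟩, hgx⟩

theorem finite_of_finiteDimensional_quotient {R : Submodule ℂ C(K, ℂ)}
    [FiniteDimensional ℂ (C(K, ℂ) ⧸ R)] {Z : Set K} (hR : ∀ f ∈ R, ∀ x ∈ Z, f x = 0) :
    Z.Finite := by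
  classical
  refine Set.finite_of_forall_finset_card_le (Module.finrank ℂ (C(K, ℂ) ⧸ R)) fun t ht => ?_
  rw [← Fintype.card_coe]
  refine Module.card_le_finrank_of_single_mem_range
    (R.liftQ (evalFinset t) fun f hf => funext fun x => hR f hf x (ht x.2)) fun x => ?_
  obtain ⟨g, -, hgx⟩ := exists_evalFinset_eq_single isOpen_univ (subset_univ _) x
  exact ⟨Submodule.Quotient.mk g, hgx⟩

end ContinuousMap

/-- If the weighted composition operator `T f = w · (f ∘ φ)` on `C(K, ℂ)`
is semi-Fredholm, then the zero set of `w` is finite and consists of isolated points. -/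
theorem stmt0 {K : Type*} [TopologicalSpace K] [CompactSpace K] [T2Space K]
    (φ : K ≃ₜ K) (w : C(K, ℂ))
    (T : C(K, ℂ) →L[ℂ] C(K, ℂ))
    (hT : ∀ f : C(K, ℂ), ∀ k : K, T f k = w k * f (φ k))
    (hclosed : IsClosed (LinearMap.range (T : C(K, ℂ) →ₗ[ℂ] C(K, ℂ)) : Set C(K, ℂ)))
    (hfin : FiniteDimensional ℂ (LinearMap.ker (T : C(K, ℂ) →ₗ[ℂ] C(K, ℂ))) ∨
      FiniteDimensional ℂ (C(K, ℂ) ⧸ LinearMap.range (T : C(K, ℂ) →ₗ[ℂ] C(K, ℂ)))) :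
    {k : K | w k = 0}.Finite ∧ ∀ k : K, w k = 0 → IsOpen ({k} : Set K) := by
  have hTcomp : ∀ f, T f = w * f.comp φ := fun f => ContinuousMap.ext (hT f)
  have hrange : (LinearMap.range (T : C(K, ℂ) →ₗ[ℂ] C(K, ℂ)) : Set C(K, ℂ)) = range (w * ·) := by
    ext g
    refine ⟨fun ⟨f, hf⟩ => ⟨f.comp φ, hf ▸ (hTcomp f).symm⟩, fun ⟨u, hu⟩ => ⟨u.comp φ.symm, ?_⟩⟩
    simp [hTcomp, ← hu]
  have hopen : IsOpen {k | w k = 0} :=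
    w.isOpen_setOf_eq_zero_of_isClosed_range_mul (hrange ▸ hclosed)
  have hfinite : {k | w k = 0}.Finite := by
    rcases hfin with _ | _
    · refine Finite.of_preimage ?_ φ.symm.surjective
      refine ContinuousMap.finite_of_finiteDimensional_of_supported_mem
        (S := LinearMap.ker T.toLinearMap) (hopen.preimage φ.symm.continuous)
        fun f hf => LinearMap.mem_ker.2 (ContinuousMap.ext fun k => ?_)
      by_cases hk : w k = 0
      · simp [hT, hk]
      · simp [hT, hf (φ k) (by simpa using hk)]
    · refine ContinuousMap.finite_of_finiteDimensional_quotient (R := LinearMap.range T.toLinearMap)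
        fun f ⟨g, hg⟩ k hk => ?_
      simp [← hg, hT, show w k = 0 from hk]
  exact ⟨hfinite, fun k hk => isOpen_singleton_of_finite_mem_nhds k (hopen.mem_nhds hk) hfinite⟩
end

section
/- Let K be a compact Hausdorff space, w ∈ C(K), φ a homeomorphism of K onto itself, and T the weighted composition operator (Tf)(k) = w(k) f(φ(k)) on C(K). If the zero set Z = {k ∈ K : w(k) = 0} is finite and every point of Z is isolated in K, then T is Fredholm of index 0. -/
/-!
Write `T = M_w ∘ C_φ`, where `C_φ f = f ∘ φ` is invertible and `M_w` is multiplication by `w`;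
then `T` has the range of `M_w` and a kernel isomorphic to that of `M_w`. Let `Z` be the zero set
of `w`. Since the points of `Z` are isolated, `g / w` is continuous as soon as `g` vanishes on `Z`,
so the range of `M_w` is the kernel of the restriction map `C(K) → 𝕜^Z`, which is continuous and
surjective; hence the range is closed and the cokernel is `𝕜^Z`. The kernel of `M_w` consists of
the functions vanishing off `Z`, and as `Z` is closed and discrete these are exactly the extensions
by zero of functions on `Z`: the kernel is `𝕜^Z` as well.
-/

theorem continuousAt_of_isOpen_singleton {K Y : Type*} [TopologicalSpace K] [TopologicalSpace Y]
    {f : K → Y} {k : K} (hk : IsOpen ({k} : Set K)) : ContinuousAt f k := by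
  rw [ContinuousAt, (isOpen_singleton_iff_nhds_eq_pure k).1 hk]
  exact tendsto_pure_nhds f k

theorem exists_continuousMap_extend_zero {K M : Type*} [TopologicalSpace K] [TopologicalSpace M]
    [Zero M] {Z : Set K} (hZ : IsClosed Z) (hiso : ∀ z ∈ Z, IsOpen ({z} : Set K)) (v : Z → M) :
    ∃ f : C(K, M), (∀ z : Z, f z = v z) ∧ ∀ k ∉ Z, f k = 0 := by
  classical
  let f : K → M := fun k => if hk : k ∈ Z then v ⟨k, hk⟩ else 0
  have hf : Continuous f := by
    refine continuous_iff_continuousAt.2 fun k => ?_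
    by_cases hk : k ∈ Z
    · exact continuousAt_of_isOpen_singleton (hiso k hk)
    · refine (continuousAt_const (y := (0 : M))).congr ?_
      filter_upwards [hZ.isOpen_compl.mem_nhds hk] with y hy
      simp only [f, dif_neg (show y ∉ Z from hy)]
  exact ⟨⟨f, hf⟩, fun z => dif_pos z.2, fun k hk => dif_neg hk⟩

def LinearMap.kerCompEquiv {R M N P : Type*} [Semiring R] [AddCommMonoid M]
    [AddCommMonoid N] [AddCommMonoid P] [Module R M] [Module R N] [Module R P]
    (f : N →ₗ[R] P) (e : M ≃ₗ[R] N) : ker (f ∘ₗ e.toLinearMap) ≃ₗ[R] ker f :=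
  e.ofSubmodules _ _ (by rw [ker_comp, Submodule.map_comap_eq_of_surjective e.surjective])

namespace ContinuousMap

variable {K 𝕜 : Type*} [TopologicalSpace K] [NormedField 𝕜]

theorem dvd_of_isolated_zeros {w g : C(K, 𝕜)} (hiso : ∀ k, w k = 0 → IsOpen ({k} : Set K))
    (hg : ∀ k, w k = 0 → g k = 0) : w ∣ g := by
  have hcont : Continuous fun k => g k / w k := by
    refine continuous_iff_continuousAt.2 fun k => ?_
    by_cases hk : w k = 0
    · exact continuousAt_of_isOpen_singleton (hiso k hk)
    · exact g.continuous.continuousAt.div w.continuous.continuousAt hk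
  refine ⟨⟨_, hcont⟩, ext fun k => ?_⟩
  by_cases hk : w k = 0
  · simp [hk, hg k hk]
  · simp [mul_div_cancel₀ _ hk]

variable (𝕜) in
def restrictCLM (Z : Set K) : C(K, 𝕜) →L[𝕜] (Z → 𝕜) :=
  ContinuousLinearMap.pi fun z => evalCLM 𝕜 (z : K)

@[simp]
theorem restrictCLM_apply (Z : Set K) (f : C(K, 𝕜)) (z : Z) : restrictCLM 𝕜 Z f z = f z :=
  rfl

theorem surjective_restrictCLM {Z : Set K} (hZ : IsClosed Z)
    (hiso : ∀ z ∈ Z, IsOpen ({z} : Set K)) : Function.Surjective (restrictCLM 𝕜 Z) := fun v =>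
  let ⟨f, hf, _⟩ := exists_continuousMap_extend_zero hZ hiso v
  ⟨f, funext hf⟩

section MulLeft

open LinearMap

variable (w : C(K, 𝕜)) (hiso : ∀ k, w k = 0 → IsOpen ({k} : Set K))

include hiso

theorem range_mulLeft_eq_ker_restrictCLM :
    range (mulLeft 𝕜 w) = (restrictCLM 𝕜 {k | w k = 0}).ker := by
  ext g
  simp only [mem_range, mem_ker, mulLeft_apply, funext_iff, Pi.zero_apply, Subtype.forall,
    Set.mem_ofPred_eq]
  constructor
  · rintro ⟨f, rfl⟩ k hk
    simp [hk]
  · intro hg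
    obtain ⟨h, rfl⟩ := dvd_of_isolated_zeros hiso hg
    exact ⟨h, rfl⟩

theorem bijective_restrictCLM_comp_ker_mulLeft :
    Function.Bijective
      ((restrictCLM 𝕜 {k | w k = 0}).toLinearMap ∘ₗ (ker (mulLeft 𝕜 w)).subtype) := by
  have mem_ker_iff (f : C(K, 𝕜)) : f ∈ ker (mulLeft 𝕜 w) ↔ ∀ k, w k ≠ 0 → f k = 0 := by
    simp [ContinuousMap.ext_iff, or_iff_not_imp_left]
  constructor
  · refine (injective_iff_map_eq_zero _).2 fun ⟨f, hf⟩ hf0 => Subtype.ext <| ext fun k => ?_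
    by_cases hk : w k = 0
    · exact congrFun hf0 ⟨k, hk⟩
    · exact (mem_ker_iff f).1 hf k hk
  · intro v
    obtain ⟨f, hfZ, hf⟩ :=
      exists_continuousMap_extend_zero (isClosed_singleton.preimage w.continuous) hiso v
    exact ⟨⟨f, (mem_ker_iff f).2 hf⟩, funext hfZ⟩

noncomputable def kerMulLeftEquiv : ker (mulLeft 𝕜 w) ≃ₗ[𝕜] ({k | w k = 0} → 𝕜) :=
  .ofBijective _ (bijective_restrictCLM_comp_ker_mulLeft w hiso)

noncomputable def quotRangeMulLeftEquiv :
    (C(K, 𝕜) ⧸ range (mulLeft 𝕜 w)) ≃ₗ[𝕜] ({k | w k = 0} → 𝕜) :=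
  (Submodule.quotEquivOfEq _ _ (range_mulLeft_eq_ker_restrictCLM w hiso)).trans
    (quotKerEquivOfSurjective _
      (surjective_restrictCLM (isClosed_singleton.preimage w.continuous) hiso))

end MulLeft

end ContinuousMap

theorem stmt1_general {K : Type*} [TopologicalSpace K]
    (φ : K ≃ₜ K) (w : C(K, ℂ))
    (T : C(K, ℂ) →L[ℂ] C(K, ℂ))
    (hT : ∀ f : C(K, ℂ), ∀ k : K, T f k = w k * f (φ k))
    (hZfin : {k : K | w k = 0}.Finite)
    (hZiso : ∀ k : K, w k = 0 → IsOpen ({k} : Set K)) :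
    IsClosed (LinearMap.range (T : C(K, ℂ) →ₗ[ℂ] C(K, ℂ)) : Set C(K, ℂ)) ∧
      FiniteDimensional ℂ (LinearMap.ker (T : C(K, ℂ) →ₗ[ℂ] C(K, ℂ))) ∧
      FiniteDimensional ℂ (C(K, ℂ) ⧸ LinearMap.range (T : C(K, ℂ) →ₗ[ℂ] C(K, ℂ))) ∧
      Module.finrank ℂ (LinearMap.ker (T : C(K, ℂ) →ₗ[ℂ] C(K, ℂ))) =
        Module.finrank ℂ (C(K, ℂ) ⧸ LinearMap.range (T : C(K, ℂ) →ₗ[ℂ] C(K, ℂ))) := by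
  have : Finite {k : K | w k = 0} := hZfin
  set e := (φ.compStarAlgEquiv' ℂ ℂ).toAlgEquiv.toLinearEquiv
  have hTw : (T : C(K, ℂ) →ₗ[ℂ] C(K, ℂ)) = LinearMap.mulLeft ℂ w ∘ₗ e.toLinearMap := by
    ext f k
    simp [e, hT]
  let eKer := (LinearMap.kerCompEquiv _ e).trans (ContinuousMap.kerMulLeftEquiv w hZiso)
  let eQuot := ContinuousMap.quotRangeMulLeftEquiv w hZiso
  rw [hTw, LinearEquiv.range_comp]
  refine ⟨?_, eKer.symm.finiteDimensional, eQuot.symm.finiteDimensional,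
    eKer.finrank_eq.trans eQuot.finrank_eq.symm⟩
  rw [ContinuousMap.range_mulLeft_eq_ker_restrictCLM w hZiso]
  exact ContinuousLinearMap.isClosed_ker _

/-- If the zero set of `w` is finite and consists of isolated points of `K`,
then the weighted composition operator `T f = w · (f ∘ φ)` on `C(K, ℂ)` is Fredholm of index 0. -/
theorem stmt1 {K : Type*} [TopologicalSpace K] [CompactSpace K] [T2Space K]
    (φ : K ≃ₜ K) (w : C(K, ℂ))
    (T : C(K, ℂ) →L[ℂ] C(K, ℂ))
    (hT : ∀ f : C(K, ℂ), ∀ k : K, T f k = w k * f (φ k))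
    (hZfin : {k : K | w k = 0}.Finite)
    (hZiso : ∀ k : K, w k = 0 → IsOpen ({k} : Set K)) :
    IsClosed (LinearMap.range (T : C(K, ℂ) →ₗ[ℂ] C(K, ℂ)) : Set C(K, ℂ)) ∧
      FiniteDimensional ℂ (LinearMap.ker (T : C(K, ℂ) →ₗ[ℂ] C(K, ℂ))) ∧
      FiniteDimensional ℂ (C(K, ℂ) ⧸ LinearMap.range (T : C(K, ℂ) →ₗ[ℂ] C(K, ℂ))) ∧
      Module.finrank ℂ (LinearMap.ker (T : C(K, ℂ) →ₗ[ℂ] C(K, ℂ))) =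
        Module.finrank ℂ (C(K, ℂ) ⧸ LinearMap.range (T : C(K, ℂ) →ₗ[ℂ] C(K, ℂ))) :=
  stmt1_general φ w T hT hZfin hZiso
end

section
/- Let K be a compact Hausdorff space, φ : K → K a continuous map, and T_φ the composition operator (T_φ f)(k) = f(φ(k)) on C(K). Then the Banach dual operator T_φ* on C(K)* (the space of regular Borel measures on K) preserves disjointness if and only if φ is injective. -/
/-!
Pushing a measure forward along an injective continuous map of a compact Hausdorff space is
pushing it along a measurable embedding, so a separating Borel set `s` for `μ ⟂ᵥ ν` yields the
separating set `φ '' s` for the images. Conversely, if `φ a = φ b` with `a ≠ b`, the disjoint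
point masses `δ_a` and `δ_b` have the same image `δ_{φ a}`, and a nonzero measure is never
singular to itself.
-/

open MeasureTheory

namespace MeasureTheory.VectorMeasure

variable {α β M : Type*} [MeasurableSpace α] [MeasurableSpace β]
  [AddCommMonoid M] [TopologicalSpace M]

theorem map_dirac {f : α → β} (hf : Measurable f) (x : α) (m : M) :
    (dirac x m).map f = dirac (f x) m := by
  ext s hs
  rw [map_apply _ hf hs]
  by_cases hx : f x ∈ s
  · rw [dirac_apply_of_mem (hf hs) hx, dirac_apply_of_mem hs hx]
  · rw [dirac_apply_of_notMem (show x ∉ f ⁻¹' s from hx), dirac_apply_of_notMem hx]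

theorem dirac_eq_zero_iff {x : α} {m : M} : dirac x m = 0 ↔ m = 0 := by
  refine ⟨fun h => ?_, fun h => h ▸ dirac_zero⟩
  simpa using congrArg (fun v : VectorMeasure α M => v Set.univ) h

theorem dirac_mutuallySingular_dirac [MeasurableSingletonClass α] {x y : α} (hxy : x ≠ y)
    (m n : M) : dirac x m ⟂ᵥ dirac y n :=
  ⟨{x}ᶜ, (MeasurableSet.singleton x).compl,
    fun _ ht => dirac_apply_of_notMem fun hx => ht hx rfl,
    fun _ ht => dirac_apply_of_notMem fun hy => hxy (by simpa using ht hy : y = x).symm⟩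

namespace MutuallySingular

theorem eq_zero_of_self [T2Space M] {v : VectorMeasure α M} (h : v ⟂ᵥ v) : v = 0 := by
  obtain ⟨s, hs, hv₁, hv₂⟩ := h
  ext t ht
  rw [zero_apply, ← Set.inter_union_sdiff t s,
    of_union Set.disjoint_sdiff_inter.symm (ht.inter hs) (ht.diff hs),
    hv₁ _ Set.inter_subset_right, hv₂ _ fun _ hx => hx.2, add_zero]

theorem map {N : Type*} [AddCommMonoid N] [TopologicalSpace N]
    {v : VectorMeasure α M} {w : VectorMeasure α N} {f : α → β} (hf : MeasurableEmbedding f)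
    (h : v ⟂ᵥ w) : v.map f ⟂ᵥ w.map f := by
  obtain ⟨s, hs, hv, hw⟩ := h
  refine .mk (f '' s) (hf.measurableSet_image.mpr hs) (fun t ht htm => ?_) fun t ht htm => ?_
  · rw [map_apply _ hf.measurable htm]
    refine hv _ fun x hx => ?_
    obtain ⟨y, hy, hyx⟩ := ht hx
    exact hf.injective hyx ▸ hy
  · rw [map_apply _ hf.measurable htm]
    exact hw _ fun x hx hxs => ht hx ⟨x, hxs, rfl⟩

end MutuallySingular

theorem injective_of_forall_map_mutuallySingular [MeasurableSingletonClass α] [T2Space M] [Nontrivial M]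
    {f : α → β} (hf : Measurable f)
    (h : ∀ v w : VectorMeasure α M, v ⟂ᵥ w → v.map f ⟂ᵥ w.map f) : Function.Injective f := by
  intro x y hxy
  by_contra hne
  obtain ⟨m, hm⟩ := exists_ne (0 : M)
  have hsing := h _ _ (dirac_mutuallySingular_dirac hne m m)
  rw [map_dirac hf, map_dirac hf, hxy] at hsing
  exact hm (dirac_eq_zero_iff.mp hsing.eq_zero_of_self)

end MeasureTheory.VectorMeasure

/-- For a continuous map `φ : K → K` on a compact Hausdorff space, the dual of the
composition operator `T_φ` — i.e. the pushforward `μ ↦ μ.map φ` on complex regular Borel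
measures — preserves disjointness (mutual singularity) if and only if `φ` is injective. -/
theorem stmt2 {K : Type*} [TopologicalSpace K] [CompactSpace K] [T2Space K]
    [MeasurableSpace K] [BorelSpace K]
    (φ : K → K) (hφ : Continuous φ) :
    (∀ μ ν : ComplexMeasure K, μ ⟂ᵥ ν →
      (μ.map φ) ⟂ᵥ (ν.map φ)) ↔ Function.Injective φ :=
  ⟨VectorMeasure.injective_of_forall_map_mutuallySingular hφ.measurable, fun hinj _ _ h =>
    h.map (hφ.isClosedEmbedding hinj).measurableEmbedding⟩
end

section
/- Let K be a compact Hausdorff space, φ : K → K a continuous surjection, w ∈ C(K), and T the weighted composition operator (Tf)(k) = w(k) f(φ(k)) on C(K). If T is surjective, i.e. T C(K) = C(K), then w vanishes nowhere on K, φ is a homeomorphism of K onto itself, and T is invertible on C(K). -/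
/-!
If `T f = w · (f ∘ φ)` hits the constant `1`, then `w` cannot vanish. If moreover `φ a = φ b`,
every `g = T f` satisfies `w b · g a = w a · g b`; taking `g = 1` gives `w a = w b`, so every
continuous function agrees at `a` and `b`, and complete regularity forces `a = b`. A continuous
bijection of a compact Hausdorff space is a homeomorphism, and `T` is injective because `w` is
a unit pointwise and `φ` is onto.
-/

namespace WeightedComposition

variable {X Y R : Type*} [TopologicalSpace X] [TopologicalSpace Y] [TopologicalSpace R]
  {T : C(X, R) → C(Y, R)} {w : C(Y, R)} {φ : Y → X}

theorem weight_ne_zero_of_one_mem_range [MulZeroOneClass R] [Nontrivial R]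
    (hT : ∀ f y, T f y = w y * f (φ y)) (h1 : 1 ∈ Set.range T) (y : Y) : w y ≠ 0 := by
  obtain ⟨f, hf⟩ := h1
  intro hy
  simpa [hT, hy] using congrArg (fun g : C(Y, R) => g y) hf

theorem weight_mul_apply_eq_of_map_eq [CommSemigroup R]
    (hT : ∀ f y, T f y = w y * f (φ y)) {a b : Y} (hab : φ a = φ b) (f : C(X, R)) :
    w b * T f a = w a * T f b := by
  rw [hT, hT, hab, mul_left_comm]

theorem injective_map_of_surjective {𝕜 : Type*} [RCLike 𝕜] [T35Space Y]
    {T : C(X, 𝕜) → C(Y, 𝕜)} {w : C(Y, 𝕜)} (hT : ∀ f y, T f y = w y * f (φ y))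
    (hsurj : Function.Surjective T) : Function.Injective φ := by
  intro a b hab
  by_contra hne
  obtain ⟨u, hu, hua⟩ := separatesPoints_continuous_of_t35Space hne
  let g : C(Y, 𝕜) := ⟨fun y => (u y : 𝕜), RCLike.continuous_ofReal.comp hu⟩
  have hrange : ∀ h : C(Y, 𝕜), w b * h a = w a * h b := fun h => by
    obtain ⟨f, rfl⟩ := hsurj h
    exact weight_mul_apply_eq_of_map_eq hT hab f
  have hwab : w b = w a := by simpa using hrange 1
  have hga : g a = g b := by
    rw [hwab] at hrange
    exact mul_left_cancel₀ (weight_ne_zero_of_one_mem_range hT (hsurj 1) a) (hrange g)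
  exact hua (RCLike.ofReal_inj.mp hga)

theorem injective_of_weight_ne_zero [MonoidWithZero R] [IsLeftCancelMulZero R]
    (hT : ∀ f y, T f y = w y * f (φ y)) (hw : ∀ y, w y ≠ 0)
    (hφ : Function.Surjective φ) : Function.Injective T := by
  intro f₁ f₂ h
  ext x
  obtain ⟨y, rfl⟩ := hφ x
  have hy := congrArg (fun g : C(Y, R) => g y) h
  simp only [hT] at hy
  exact mul_left_cancel₀ (hw y) hy

end WeightedComposition

open WeightedComposition in
/-- If a weighted composition operator `T f = w · (f ∘ φ)` on `C(K, ℂ)`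
(with `φ` a continuous surjection) is surjective, then `w` vanishes nowhere, `φ` is a
homeomorphism of `K` onto itself, and `T` is invertible. -/
theorem stmt3 {K : Type*} [TopologicalSpace K] [CompactSpace K] [T2Space K]
    (φ : K → K) (hφc : Continuous φ) (hφs : Function.Surjective φ)
    (w : C(K, ℂ))
    (T : C(K, ℂ) →L[ℂ] C(K, ℂ))
    (hT : ∀ f : C(K, ℂ), ∀ k : K, T f k = w k * f (φ k))
    (hsurj : Function.Surjective T) :
    (∀ k : K, w k ≠ 0) ∧ (∃ e : K ≃ₜ K, ⇑e = φ) ∧ Function.Bijective T := by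
  have hw : ∀ k, w k ≠ 0 := weight_ne_zero_of_one_mem_range hT (hsurj 1)
  have hφi : Function.Injective φ := injective_map_of_surjective hT hsurj
  exact ⟨hw, ⟨hφc.homeoOfEquivCompactToT2 (f := Equiv.ofBijective φ ⟨hφi, hφs⟩), rfl⟩,
    injective_of_weight_ne_zero hT hw hφs, hsurj⟩
end

section
/- Let K be a compact Hausdorff space, φ : K → K a continuous surjection, w ∈ C(K), and T the weighted composition operator (Tf)(k) = w(k) f(φ(k)) on C(K). If 0 is in the spectrum of T and (λ I − T) C(K) = C(K) for some λ in the spectrum of T, then λ ≠ 0. -/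
/-! If `λ = 0`, then `T` is surjective. Solving `T f = 1` shows that `w` vanishes nowhere, and then
surjectivity of `φ` makes `T` injective. By the open mapping theorem `T` is invertible, contradicting
`0 ∈ σ(T)`. -/

section WeightedComposition

variable {X R : Type*} [TopologicalSpace X] [TopologicalSpace R]

theorem weight_ne_zero_of_surjective [MulZeroOneClass R] [NeZero (1 : R)]
    {φ : X → X} {w : C(X, R)} {T : C(X, R) → C(X, R)}
    (hT : ∀ f k, T f k = w k * f (φ k)) (hsurj : Function.Surjective T) (k : X) :
    w k ≠ 0 := by
  intro hk
  obtain ⟨f, hf⟩ := hsurj 1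
  simpa [hk] using (hT f k).symm.trans (DFunLike.congr_fun hf k)

theorem injective_of_weight_ne_zero [MulZeroClass R] [IsLeftCancelMulZero R]
    {φ : X → X} (hφ : Function.Surjective φ) {w : C(X, R)} {T : C(X, R) → C(X, R)}
    (hT : ∀ f k, T f k = w k * f (φ k)) (hw : ∀ k, w k ≠ 0) :
    Function.Injective T := by
  intro f g hfg
  ext x
  obtain ⟨k, rfl⟩ := hφ x
  have := DFunLike.congr_fun hfg k
  rw [hT, hT] at this
  exact mul_left_cancel₀ (hw k) this

end WeightedComposition

theorem stmt4_general {K : Type*} [TopologicalSpace K] [CompactSpace K]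
    (φ : K → K) (hφs : Function.Surjective φ)
    (w : C(K, ℂ))
    (T : C(K, ℂ) →L[ℂ] C(K, ℂ))
    (hT : ∀ f : C(K, ℂ), ∀ k : K, T f k = w k * f (φ k))
    (h0 : (0 : ℂ) ∈ spectrum ℂ T)
    (lam : ℂ)
    (hsurj : Function.Surjective ⇑(algebraMap ℂ (C(K, ℂ) →L[ℂ] C(K, ℂ)) lam - T)) :
    lam ≠ 0 := by
  rintro rfl
  have hTsurj : Function.Surjective T := by
    rw [map_zero, zero_sub] at hsurj
    exact fun g ↦ (hsurj (-g)).imp fun _ h ↦ neg_injective h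
  have hTinj : Function.Injective T :=
    injective_of_weight_ne_zero hφs hT (weight_ne_zero_of_surjective hT hTsurj)
  exact spectrum.not_isUnit_of_zero_mem ℂ h0
    (ContinuousLinearMap.isUnit_iff_bijective.mpr ⟨hTinj, hTsurj⟩)

/-- For a weighted composition operator `T` on `C(K, ℂ)` induced by a continuous
surjection `φ`, if `0 ∈ σ(T)` and `λI − T` is surjective for some `λ ∈ σ(T)`, then `λ ≠ 0`. -/
theorem stmt4 {K : Type*} [TopologicalSpace K] [CompactSpace K] [T2Space K]
    (φ : K → K) (hφc : Continuous φ) (hφs : Function.Surjective φ)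
    (w : C(K, ℂ))
    (T : C(K, ℂ) →L[ℂ] C(K, ℂ))
    (hT : ∀ f : C(K, ℂ), ∀ k : K, T f k = w k * f (φ k))
    (h0 : (0 : ℂ) ∈ spectrum ℂ T)
    (lam : ℂ) (hlam : lam ∈ spectrum ℂ T)
    (hsurj : Function.Surjective ⇑(algebraMap ℂ (C(K, ℂ) →L[ℂ] C(K, ℂ)) lam - T)) :
    lam ≠ 0 :=
  stmt4_general φ hφs w T hT h0 lam hsurj
end

section
/- Let K be a compact Hausdorff space, φ a homeomorphism of K onto itself, w ∈ C(K), and T the operator (Tf)(k) = w(k) f(φ(k)) on C(K). Let k ∈ K be a φ-periodic point of smallest period p that is isolated in K, and suppose λ^p = w_p(k), where w_p = w · (w∘φ) ⋯ (w∘φ^{p−1}) and λ ≠ 0. Then λ is an eigenvalue of T: there exists a nonzero f ∈ C(K) with Tf = λf, supported on the finite orbit {k, φ(k), …, φ^{p−1}(k)}. -/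
/-!
The eigenfunction is `f = ∑_{i<p} c i • 1_{φ^i k}` with `c i = λ^i w(φ^i k) ⋯ w(φ^{p-1} k)`.
As `(Tf)(x) = w(x) f(φ x)`, the eigen-equation at `φ^i k` reads `w(φ^i k) c (i+1) = λ c i`,
which holds by construction, and closing the cycle needs `c p = c 0`, i.e. `λ^p = w_p(k)`.
The orbit points are isolated, so `f` is continuous, and minimality of `p` gives
`f k = c 0 = λ^p ≠ 0`.
-/

open Finset Function

section OrbitFun

variable {X M : Type*} [DecidableEq X] [AddCommMonoid M] (φ : X → X) (k : X) (p : ℕ)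

def orbitFun (c : ℕ → M) (x : X) : M :=
  ∑ i ∈ range p, if x = φ^[i] k then c i else 0

variable {φ k p}

theorem orbitFun_eq_zero {c : ℕ → M} {x : X} (hx : ∀ i < p, x ≠ φ^[i] k) :
    orbitFun φ k p c x = 0 :=
  sum_eq_zero fun i hi => if_neg (hx i (mem_range.1 hi))

theorem orbitFun_self (hp : 1 ≤ p) (hmin : ∀ q, 1 ≤ q → q < p → φ^[q] k ≠ k) (c : ℕ → M) :
    orbitFun φ k p c k = c 0 := by
  rw [orbitFun, sum_eq_single_of_mem 0 (mem_range.2 hp)]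
  · simp
  · intro i hi hi0
    exact if_neg (hmin i (by omega) (mem_range.1 hi)).symm

theorem orbitFun_apply_apply (hφ : Injective φ) (hper : φ^[p] k = k) {c : ℕ → M}
    (hc : c p = c 0) (x : X) :
    orbitFun φ k p c (φ x) = orbitFun φ k p (fun i => c (i + 1)) x := by
  set g : ℕ → M := fun i => if φ x = φ^[i] k then c i else 0
  -- Peeling off either end term of `∑ i ∈ range (p + 1), g i` works, since `g p = g 0`.
  have hshift : ∑ i ∈ range p, g i = ∑ i ∈ range p, g (i + 1) := by
    rcases p with _ | q
    · simp
    have hend : g (q + 1) = g 0 := by simp only [g]; rw [hper, hc]; rfl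
    rw [sum_range_succ', sum_range_succ _ q, hend]
  have hg : ∀ i, g (i + 1) = if x = φ^[i] k then c (i + 1) else 0 := fun i => by
    simp only [g, iterate_succ_apply', hφ.eq_iff]
  simpa only [orbitFun, hg] using hshift

theorem continuous_orbitFun [TopologicalSpace X] [T1Space X] [TopologicalSpace M]
    [ContinuousAdd M] (hφ : IsOpenMap φ) (hk : IsOpen {k}) (c : ℕ → M) :
    Continuous (orbitFun φ k p c) := by
  have hopen : ∀ n, IsOpen {φ^[n] k} := fun n => by
    induction n with
    | zero => simpa using hk
    | succ n ih => simpa [Set.image_singleton, iterate_succ_apply'] using hφ _ ih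
  refine continuous_finsetSum _ fun i _ => ?_
  have hclopen : IsClopen {φ^[i] k} := ⟨isClosed_singleton, hopen i⟩
  convert hclopen.continuous_indicator (continuous_const (y := c i)) using 1
  ext x
  simp [Set.indicator_apply]

end OrbitFun

section OrbitEigenCoeff

variable {X R : Type*} [CommSemiring R] (φ : X → X) (k : X) (p : ℕ) (w : X → R) (lam : R)

def orbitEigenCoeff (i : ℕ) : R :=
  lam ^ i * ∏ j ∈ Ico i p, w (φ^[j] k)

variable {φ k p w lam}

theorem orbitEigenCoeff_zero : orbitEigenCoeff φ k p w lam 0 = ∏ j ∈ range p, w (φ^[j] k) := by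
  rw [orbitEigenCoeff, pow_zero, one_mul, range_eq_Ico]

theorem orbitEigenCoeff_self : orbitEigenCoeff φ k p w lam p = lam ^ p := by
  simp [orbitEigenCoeff]

theorem mul_orbitEigenCoeff_succ {i : ℕ} (hi : i < p) :
    w (φ^[i] k) * orbitEigenCoeff φ k p w lam (i + 1) = lam * orbitEigenCoeff φ k p w lam i := by
  rw [orbitEigenCoeff, orbitEigenCoeff, prod_eq_prod_Ico_succ_bot hi, pow_succ]
  ring

theorem mul_orbitFun_orbitEigenCoeff_apply [DecidableEq X] (hφ : Injective φ)
    (hper : φ^[p] k = k) (heig : lam ^ p = ∏ i ∈ range p, w (φ^[i] k)) (x : X) :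
    w x * orbitFun φ k p (orbitEigenCoeff φ k p w lam) (φ x) =
      lam * orbitFun φ k p (orbitEigenCoeff φ k p w lam) x := by
  rw [orbitFun_apply_apply hφ hper (by rw [orbitEigenCoeff_self, orbitEigenCoeff_zero, heig]),
    orbitFun, orbitFun, mul_sum, mul_sum]
  refine sum_congr rfl fun i hi => ?_
  split_ifs with hx
  · rw [hx, mul_orbitEigenCoeff_succ (mem_range.1 hi)]
  · simp

end OrbitEigenCoeff

theorem stmt9_general {K : Type*} [TopologicalSpace K] [T2Space K]
    (φ : K ≃ₜ K) (w : C(K, ℂ))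
    (T : C(K, ℂ) →L[ℂ] C(K, ℂ))
    (hT : ∀ f : C(K, ℂ), ∀ k : K, T f k = w k * f (φ k))
    (k : K) (hiso : IsOpen ({k} : Set K))
    (p : ℕ) (hp : 1 ≤ p) (hper : φ^[p] k = k)
    (hmin : ∀ q : ℕ, 1 ≤ q → q < p → φ^[q] k ≠ k)
    (lam : ℂ) (hlam : lam ≠ 0)
    (heig : lam ^ p = ∏ i ∈ Finset.range p, w (φ^[i] k)) :
    ∃ f : C(K, ℂ), f ≠ 0 ∧ T f = lam • f ∧
      ∀ x : K, (∀ i : ℕ, i < p → x ≠ φ^[i] k) → f x = 0 := by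
  classical
  let f : C(K, ℂ) := ⟨orbitFun φ k p (orbitEigenCoeff φ k p w lam),
    continuous_orbitFun φ.isOpenMap hiso _⟩
  have hfk : f k = lam ^ p := by
    rw [ContinuousMap.coe_mk, orbitFun_self hp hmin, orbitEigenCoeff_zero, heig]
  refine ⟨f, fun hf => ?_, ?_, fun x hx => orbitFun_eq_zero hx⟩
  · exact pow_ne_zero p hlam (by simpa [hf] using hfk.symm)
  · ext x
    rw [hT, ContinuousMap.smul_apply, smul_eq_mul]
    exact mul_orbitFun_orbitEigenCoeff_apply φ.injective hper heig x

/-- If `k` is an isolated `φ`-periodic point of smallest period `p` and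
`λ^p = w_p(k)` with `λ ≠ 0`, then `λ` is an eigenvalue of the weighted composition operator `T`,
with an eigenfunction supported on the finite orbit of `k`. -/
theorem stmt9 {K : Type*} [TopologicalSpace K] [CompactSpace K] [T2Space K]
    (φ : K ≃ₜ K) (w : C(K, ℂ))
    (T : C(K, ℂ) →L[ℂ] C(K, ℂ))
    (hT : ∀ f : C(K, ℂ), ∀ k : K, T f k = w k * f (φ k))
    (k : K) (hiso : IsOpen ({k} : Set K))
    (p : ℕ) (hp : 1 ≤ p) (hper : φ^[p] k = k)
    (hmin : ∀ q : ℕ, 1 ≤ q → q < p → φ^[q] k ≠ k)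
    (lam : ℂ) (hlam : lam ≠ 0)
    (heig : lam ^ p = ∏ i ∈ Finset.range p, w (φ^[i] k)) :
    ∃ f : C(K, ℂ), f ≠ 0 ∧ T f = lam • f ∧
      ∀ x : K, (∀ i : ℕ, i < p → x ≠ φ^[i] k) → f x = 0 :=
  stmt9_general φ w T hT k hiso p hp hper hmin lam hlam heig
end

section
/- Let K be a compact Hausdorff space, φ : K → K an open continuous surjection, w ∈ C(K) with |w| > 0, T = wT_φ, and suppose 1 ∈ σ(T) with 1 ∉ σ_ap(T*). Let G ⊆ K be a closed φ-invariant set on which φ restricts to a homeomorphism and on which the restricted operator T_G is invertible with ρ(T_G^{−1}) < 1. Then there exists n₀ such that for all n ≥ n₀ and all k ∈ G, |w_{n+1}(k)| > 2; in particular the set Q_n = {k ∈ K : |w_{n+1}(k)| > 2} is an open neighborhood of G for all n ≥ n₀. -/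
open Filter Topology

/-!
On `G` the operator `T_G` is a weighted composition operator, so `T_G ^ n` multiplies by the
cocycle `w_n` after composing with `φ^[n]`. Evaluating `T_G ^ n (S_G ^ n 1) = 1` at a point `k`
gives `1 ≤ |w_n(k)| ‖S_G ^ n‖`, and Gelfand's formula makes `‖S_G ^ n‖` tend to `0` when
`ρ(S_G) < 1`. Openness of `{|w_{n+1}| > 2}` is continuity of `w_{n+1}`.
-/

theorem tendsto_norm_pow_atTop_nhds_zero_of_spectralRadius_lt_one {A : Type*} [NormedRing A]
    [NormedAlgebra ℂ A] [CompleteSpace A] {a : A} (ha : spectralRadius ℂ a < 1) :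
    Tendsto (fun n : ℕ => ‖a ^ n‖) atTop (𝓝 0) := by
  obtain ⟨r, hρr, hr1⟩ := ENNReal.lt_iff_exists_nnreal_btwn.mp ha
  have hbound : ∀ᶠ n : ℕ in atTop, ‖a ^ n‖ ≤ (r : ℝ) ^ n := by
    have hgelfand := spectrum.pow_nnnorm_pow_one_div_tendsto_nhds_spectralRadius a
    filter_upwards [hgelfand.eventually_lt_const hρr, eventually_gt_atTop 0] with n hn hn0
    rw [one_div, ENNReal.rpow_inv_lt_iff (by positivity), ENNReal.rpow_natCast,
      ← ENNReal.coe_pow, ENNReal.coe_lt_coe] at hn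
    exact_mod_cast hn.le
  exact squeeze_zero' (Eventually.of_forall fun n => norm_nonneg _) hbound
    (tendsto_pow_atTop_nhds_zero_of_lt_one r.coe_nonneg (by exact_mod_cast hr1))

section WeightedComposition

variable {X 𝕜 : Type*} [TopologicalSpace X] [NontriviallyNormedField 𝕜]

theorem pow_apply_of_weighted_comp {A : C(X, 𝕜) →L[𝕜] C(X, 𝕜)} {v : X → 𝕜} {ψ : X → X}
    (hA : ∀ f x, A f x = v x * f (ψ x)) (n : ℕ) (f : C(X, 𝕜)) (x : X) :
    (A ^ n) f x = (∏ i ∈ Finset.range n, v (ψ^[i] x)) * f (ψ^[n] x) := by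
  induction n generalizing f x with
  | zero => simp
  | succ n ih =>
    rw [pow_succ, mul_apply_eq_comp, ih, hA, Finset.prod_range_succ,
      Function.iterate_succ_apply']
    ring

theorem one_le_norm_mul_opNorm_of_weighted_comp_mul_eq_one [CompactSpace X]
    {A B : C(X, 𝕜) →L[𝕜] C(X, 𝕜)} {v : X → 𝕜} {ψ : X → X}
    (hA : ∀ f x, A f x = v x * f (ψ x)) (hAB : A * B = 1) (x : X) :
    1 ≤ ‖v x‖ * ‖B‖ := by
  have : Nonempty X := ⟨x⟩
  calc (1 : ℝ) = ‖A (B 1) x‖ := by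
        rw [← mul_apply_eq_comp, hAB]; simp
    _ = ‖v x‖ * ‖B 1 (ψ x)‖ := by rw [hA, norm_mul]
    _ ≤ ‖v x‖ * ‖B‖ := by
        gcongr
        calc ‖B 1 (ψ x)‖ ≤ ‖B 1‖ := (B 1).norm_coe_le_norm _
          _ ≤ ‖B‖ * ‖(1 : C(X, 𝕜))‖ := B.le_opNorm 1
          _ = ‖B‖ := by rw [norm_one, mul_one]

theorem one_le_norm_prod_mul_opNorm_pow_of_weighted_comp_mul_eq_one [CompactSpace X]
    {A B : C(X, 𝕜) →L[𝕜] C(X, 𝕜)} {v : X → 𝕜} {ψ : X → X}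
    (hA : ∀ f x, A f x = v x * f (ψ x)) (hAB : A * B = 1) (n : ℕ) (x : X) :
    1 ≤ ‖∏ i ∈ Finset.range n, v (ψ^[i] x)‖ * ‖B ^ n‖ :=
  one_le_norm_mul_opNorm_of_weighted_comp_mul_eq_one
    (pow_apply_of_weighted_comp hA n) (pow_mul_pow_eq_one n hAB) x

end WeightedComposition

theorem stmt15_general {K : Type*} [TopologicalSpace K]
    (φ : K → K) (hφc : Continuous φ)
    (w : C(K, ℂ))
    (G : Set K) [CompactSpace G]
    (hmemG : ∀ x ∈ G, φ x ∈ G)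
    (TG SG : C(G, ℂ) →L[ℂ] C(G, ℂ))
    (hTG : ∀ f : C(G, ℂ), ∀ x : G, TG f x = w x * f ⟨φ x, hmemG x x.2⟩)
    (hinv₁ : TG.comp SG = 1)
    (hρ : spectralRadius ℂ SG < 1) :
    ∃ n₀ : ℕ, ∀ n : ℕ, n₀ ≤ n →
      (∀ k ∈ G, 2 < ‖∏ i ∈ Finset.range (n + 1), w (φ^[i] k)‖) ∧
      G ⊆ {k : K | 2 < ‖∏ i ∈ Finset.range (n + 1), w (φ^[i] k)‖} ∧
      IsOpen {k : K | 2 < ‖∏ i ∈ Finset.range (n + 1), w (φ^[i] k)‖} := by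
  have hpow :=
    tendsto_norm_pow_atTop_nhds_zero_of_spectralRadius_lt_one (A := C(G, ℂ) →L[ℂ] C(G, ℂ)) hρ
  have hsmall : ∀ᶠ m : ℕ in atTop, ‖SG ^ m‖ < 1 / 2 := hpow.eventually_lt_const (by norm_num)
  obtain ⟨N, hN⟩ := eventually_atTop.mp hsmall
  have hTS : TG * SG = 1 := by rwa [ContinuousLinearMap.mul_def]
  refine ⟨N, fun n hn => ?_⟩
  have hcocycle : ∀ k ∈ G, 2 < ‖∏ i ∈ Finset.range (n + 1), w (φ^[i] k)‖ := by
    intro k hk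
    have hlower := one_le_norm_prod_mul_opNorm_pow_of_weighted_comp_mul_eq_one
      (v := fun x : G => w x) (ψ := Set.MapsTo.restrict φ G G hmemG) hTG hTS (n + 1) ⟨k, hk⟩
    simp only [Set.MapsTo.coe_iterate_restrict (f := φ) (s := G) hmemG] at hlower
    have hSn := hN (n + 1) (by omega)
    nlinarith [norm_nonneg (SG ^ (n + 1))]
  refine ⟨hcocycle, hcocycle, isOpen_lt continuous_const ?_⟩
  exact (continuous_finsetProd _ fun i _ => w.continuous.comp (hφc.iterate i)).norm

/-- With `φ` an open continuous surjection, `|w| > 0`, `1 ∈ σ(T)` and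
`1 ∉ σ_ap(T*)`, if `G` is a closed `φ`-invariant set on which `φ` is injective and the induced
operator `T_G` is invertible with `ρ(T_G⁻¹) < 1`, then for all sufficiently large `n` the cocycle
satisfies `|w_{n+1}| > 2` on `G`; in particular `Q_n = {k : |w_{n+1}(k)| > 2}` is an open
neighbourhood of `G`. -/
theorem stmt15 {K : Type*} [TopologicalSpace K] [CompactSpace K] [T2Space K]
    (φ : K → K) (hφc : Continuous φ) (hφo : IsOpenMap φ) (hφs : Function.Surjective φ)
    (w : C(K, ℂ)) (hw : ∀ k, w k ≠ 0)
    (T : C(K, ℂ) →L[ℂ] C(K, ℂ))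
    (hT : ∀ f : C(K, ℂ), ∀ k : K, T f k = w k * f (φ k))
    (h1 : (1 : ℂ) ∈ spectrum ℂ T)
    (hap : ¬ ∃ μ : ℕ → StrongDual ℂ C(K, ℂ),
        (∀ n, ‖μ n‖ = 1) ∧
        Tendsto (fun n => ‖(μ n).comp T - μ n‖) atTop (nhds 0))
    (G : Set K) [CompactSpace G] (hGclosed : IsClosed G) (hGinv : φ '' G = G)
    (hGinj : Set.InjOn φ G) (hmemG : ∀ x ∈ G, φ x ∈ G)
    (TG SG : C(G, ℂ) →L[ℂ] C(G, ℂ))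
    (hTG : ∀ f : C(G, ℂ), ∀ x : G, TG f x = w x * f ⟨φ x, hmemG x x.2⟩)
    (hinv₁ : TG.comp SG = 1) (hinv₂ : SG.comp TG = 1)
    (hρ : spectralRadius ℂ SG < 1) :
    ∃ n₀ : ℕ, ∀ n : ℕ, n₀ ≤ n →
      (∀ k ∈ G, 2 < ‖∏ i ∈ Finset.range (n + 1), w (φ^[i] k)‖) ∧
      G ⊆ {k : K | 2 < ‖∏ i ∈ Finset.range (n + 1), w (φ^[i] k)‖} ∧
      IsOpen {k : K | 2 < ‖∏ i ∈ Finset.range (n + 1), w (φ^[i] k)‖} :=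
  stmt15_general φ hφc w G hmemG TG SG hTG hinv₁ hρ
end
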